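/- arXiv:cs/0503008 — 4 statements merged into one kernel-verified Lean document; each statement's English description precedes it below -/
import Mathlib

section
/- If a real square matrix A is sign semi-stable, then all its diagonal entries are non-positive: a_{ii} ≤ 0 for all i. -/
open Real Matrix
open Polynomial

lemma root_mem_spectrum {n : ℕ} (M : Matrix (Fin n) (Fin n) ℂ) (μ : ℂ)
    (h : M.charpoly.IsRoot μ) : μ ∈ spectrum ℂ M := by
  rw [spectrum.mem_iff, Matrix.isUnit_iff_isUnit_det, isUnit_iff_ne_zero]
  have : M.charpoly.eval μ = ((algebraMap ℂ (Matrix (Fin n) (Fin n) ℂ)) μ - M).det := by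
    rw [Matrix.charpoly, _root_.eval_det, matPolyEquiv_charmatrix]
    simp only [eval_sub, eval_X, eval_C]
    rfl
  simp only [not_not]
  rw [← this]
  exact h

lemma sign_sign (x : ℝ) : Real.sign (Real.sign x) = Real.sign x := by
  rcases lt_trichotomy x 0 with h | h | h
  · rw [Real.sign_of_neg h]; rw [Real.sign_of_neg (by norm_num)]
  · simp [h]
  · rw [Real.sign_of_pos h, Real.sign_of_pos one_pos]

lemma multiset_sum_nonpos (s : Multiset ℝ) (h : ∀ x ∈ s, x ≤ 0) : s.sum ≤ 0 := by
  induction s using Multiset.induction with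
  | empty => simp
  | cons a s ih =>
    simp only [Multiset.sum_cons]
    have h1 := h a (by simp)
    have h2 := ih (fun x hx => h x (by simp [hx]))
    linarith

lemma sign_ge_neg_one (x : ℝ) : -1 ≤ Real.sign x := by
  rcases lt_trichotomy x 0 with h | h | h
  · rw [Real.sign_of_neg h]
  · simp [h]
  · rw [Real.sign_of_pos h]; norm_num

/-- All eigenvalues (over ℂ) have non-positive real part. -/
def MatSemiStable {n : ℕ} (A : Matrix (Fin n) (Fin n) ℝ) : Prop :=
  ∀ μ ∈ spectrum ℂ (A.map (Complex.ofReal : ℝ → ℂ)), μ.re ≤ 0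

/-- Two matrices have the same sign pattern. -/
def SameSignPattern {n : ℕ} (A B : Matrix (Fin n) (Fin n) ℝ) : Prop :=
  ∀ i j, Real.sign (A i j) = Real.sign (B i j)

/-- Every matrix with the same sign pattern is semi-stable. -/
def SignSemiStable {n : ℕ} (A : Matrix (Fin n) (Fin n) ℝ) : Prop :=
  ∀ B, SameSignPattern A B → MatSemiStable B

theorem sign_semi_stable_diag_nonpos {n : ℕ}
    (A : Matrix (Fin n) (Fin n) ℝ) (hA : SignSemiStable A) :
    ∀ i, A i i ≤ 0 := by
  intro i
  by_contra hpos
  push_neg at hpos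
  set B : Matrix (Fin n) (Fin n) ℝ :=
    fun p q => if p = i ∧ q = i then (n : ℝ) + 1 else Real.sign (A p q) with hB
  have hsgn : SameSignPattern A B := by
    intro p q
    by_cases h : p = i ∧ q = i
    · have hBii : B i i = (n : ℝ) + 1 := by simp [hB]
      rw [h.1, h.2, hBii, Real.sign_of_pos hpos, Real.sign_of_pos (by positivity)]
    · simp only [hB, if_neg h]
      exact (sign_sign _).symm
  have hst := hA B hsgn
  -- trace of B is positive
  have htr : 1 ≤ B.trace := by
    have : B.trace = ((n : ℝ) + 1) + ∑ j ∈ Finset.univ.erase i, Real.sign (A j j) := by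
      rw [Matrix.trace, ← Finset.add_sum_erase _ _ (Finset.mem_univ i)]
      congr 1
      · simp [hB, Matrix.diag]
      · apply Finset.sum_congr rfl
        intro j hj
        simp [hB, Matrix.diag, (Finset.mem_erase.mp hj).1]
    rw [this]
    have hsum : -(n : ℝ) ≤ ∑ j ∈ Finset.univ.erase i, Real.sign (A j j) := by
      calc -(n : ℝ) ≤ ∑ _j ∈ Finset.univ.erase i, (-1 : ℝ) := by
            rw [Finset.sum_const, Finset.card_erase_of_mem (Finset.mem_univ i)]
            simp only [Finset.card_univ, Fintype.card_fin, nsmul_eq_mul, mul_neg_one]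
            have : ((n - 1 : ℕ) : ℝ) ≤ n := by exact_mod_cast Nat.sub_le n 1
            linarith
        _ ≤ _ := Finset.sum_le_sum fun j _ => sign_ge_neg_one _
    linarith
  -- complex trace
  let M := B.map (Complex.ofReal : ℝ → ℂ)
  have htrM : M.trace = (B.trace : ℂ) := by
    simp [M, Matrix.trace, Matrix.diag, Matrix.map_apply]
  have hroots : M.trace = M.charpoly.roots.sum := Matrix.trace_eq_sum_roots_charpoly M
  have hle : (M.charpoly.roots.sum).re ≤ 0 := by
    have : M.charpoly.roots.sum.re = (M.charpoly.roots.map Complex.re).sum := by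
      exact (Complex.reAddGroupHom.map_multiset_sum _)
    rw [this]
    apply multiset_sum_nonpos
    intro x hx
    obtain ⟨μ, hμ, rfl⟩ := Multiset.mem_map.mp hx
    exact hst μ (root_mem_spectrum M μ (Polynomial.isRoot_of_mem_roots hμ))
  rw [← hroots, htrM, Complex.ofReal_re] at hle
  linarith
end

section
/- If a real square matrix A is sign semi-stable, then for all i ≠ j, a_{ij} a_{ji} ≤ 0. -/
open Real Matrix

open Polynomial in
lemma eval_charpoly' {n : ℕ} (B : Matrix (Fin n) (Fin n) ℝ) (x : ℝ) :
    B.charpoly.eval x = (Matrix.diagonal (fun _ => x) - B).det := by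
  rw [Matrix.charpoly, ← Polynomial.coe_evalRingHom, RingHom.map_det]
  congr 1
  ext k l
  by_cases h : k = l <;>
    simp [h, Matrix.charmatrix_apply, Matrix.diagonal_apply, Matrix.sub_apply]

open Polynomial Filter in
/-- For a semi-stable real matrix `B` and `c > 0`, the determinant of `c•1 - B` is positive. -/
lemma det_pos_of_matSemiStable {n : ℕ} (hn : 0 < n) (B : Matrix (Fin n) (Fin n) ℝ)
    (hB : MatSemiStable B) {c : ℝ} (hc : 0 < c) :
    0 < (Matrix.diagonal (fun _ => c) - B).det := by
  have hroot : ∀ x : ℝ, 0 < x → (Matrix.diagonal (fun _ => x) - B).det ≠ 0 := by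
    intro x hx h0
    have hmem : (x : ℂ) ∈ spectrum ℂ (B.map (Complex.ofReal : ℝ → ℂ)) := by
      rw [spectrum.mem_iff, Matrix.isUnit_iff_isUnit_det, isUnit_iff_ne_zero, not_not]
      have he : (algebraMap ℂ (Matrix (Fin n) (Fin n) ℂ)) (x : ℂ) - B.map Complex.ofReal
          = ((Matrix.diagonal (fun _ => x) - B).map (Complex.ofReal : ℝ → ℂ)) := by
        rw [Matrix.algebraMap_eq_diagonal]
        ext k l
        by_cases h : k = l <;> simp [h, Matrix.diagonal_apply]
      rw [he]
      have : (((Matrix.diagonal (fun _ => x) - B).map (Complex.ofReal : ℝ → ℂ))).det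
          = (Complex.ofRealHom) ((Matrix.diagonal (fun _ => x) - B)).det := by
        rw [RingHom.map_det]; rfl
      rw [this, h0, map_zero]
    have := hB _ hmem
    simp only [Complex.ofReal_re] at this
    linarith
  have hmono := B.charpoly_monic
  have hdeg : 0 < B.charpoly.degree := by
    rw [Matrix.charpoly_degree_eq_dim]
    simpa using hn
  have htend := Polynomial.tendsto_atTop_of_leadingCoeff_nonneg B.charpoly hdeg
    (by simp [hmono.leadingCoeff])
  have hev : ∀ᶠ x in atTop, 0 < B.charpoly.eval x ∧ c ≤ x :=
    (htend.eventually_gt_atTop 0).and (eventually_ge_atTop c)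
  obtain ⟨C, hC1, hC2⟩ := hev.exists
  by_contra hle
  push_neg at hle
  have hne := hroot c hc
  have hlt : (Matrix.diagonal (fun _ => c) - B).det < 0 := lt_of_le_of_ne hle hne
  have hcont : ContinuousOn (fun x => B.charpoly.eval x) (Set.Icc c C) :=
    (B.charpoly.continuous_aeval).continuousOn
  have h0mem : (0:ℝ) ∈ Set.Icc (B.charpoly.eval c) (B.charpoly.eval C) := by
    constructor
    · rw [eval_charpoly']; linarith
    · linarith
  obtain ⟨x, hx, hx0⟩ := intermediate_value_Icc hC2 hcont h0mem
  exact hroot x (lt_of_lt_of_le hc hx.1) (by rw [← eval_charpoly']; exact hx0)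

lemma updateRow_comm' {n : ℕ} {R : Type*} (M : Matrix (Fin n) (Fin n) R) {i j : Fin n}
    (hij : i ≠ j) (u v : Fin n → R) :
    (M.updateRow i u).updateRow j v = (M.updateRow j v).updateRow i u := by
  ext k l
  rcases eq_or_ne k i with rfl | hki <;> rcases eq_or_ne k j with rfl | hkj <;>
    simp_all [Matrix.updateRow_apply]

lemma prod_d {n : ℕ} {i j : Fin n} (hij : i ≠ j) (c : ℝ) :
    (∏ k : Fin n, (if k = i ∨ k = j then (1:ℝ) else c)) = c ^ (n - 2) := by
  have h1 : (Finset.univ.filter (fun k : Fin n => ¬(k = i ∨ k = j))) =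
      (Finset.univ \ {i, j}) := by
    ext k; simp [not_or]
  have h2 : ((Finset.univ.filter (fun k : Fin n => ¬(k = i ∨ k = j)))).card = n - 2 := by
    rw [h1, Finset.card_sdiff_of_subset (by simp)]
    rw [Finset.card_insert_of_notMem (by simp [hij]), Finset.card_singleton]
    simp
  rw [Finset.prod_ite, Finset.prod_const_one, one_mul, Finset.prod_const, h2]

/-- The determinant of `c•1 - B₀` where `B₀` has just two (symmetrically placed) nonzero
entries `a`, `b`. -/
lemma det_two_entries {n : ℕ} {i j : Fin n} (hij : i ≠ j) (a b c : ℝ) :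
    (Matrix.diagonal (fun _ => c) -
      Matrix.of (fun k l => if k = i ∧ l = j then a else if k = j ∧ l = i then b else 0)).det
      = c ^ (n - 2) * (c ^ 2 - a * b) := by
  classical
  set ei : Fin n → ℝ := Pi.single i 1 with hei
  set ej : Fin n → ℝ := Pi.single j 1 with hej
  set D : Matrix (Fin n) (Fin n) ℝ := Matrix.diagonal (fun _ => c) with hD
  have heq : (Matrix.diagonal (fun _ => c) -
      Matrix.of (fun k l => if k = i ∧ l = j then a else if k = j ∧ l = i then b else 0))
      = (D.updateRow i (c • ei + (-a) • ej)).updateRow j (c • ej + (-b) • ei) := by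
    ext k l
    simp only [Matrix.sub_apply, Matrix.diagonal_apply, Matrix.of_apply,
      Matrix.updateRow_apply, Pi.add_apply, Pi.smul_apply, Pi.single_apply, smul_eq_mul,
      hei, hej, hD]
    split_ifs <;> simp_all
  rw [heq]
  rw [Matrix.det_updateRow_add, Matrix.det_updateRow_smul, Matrix.det_updateRow_smul]
  rw [updateRow_comm' _ hij (c • ei + (-a) • ej) ej,
      updateRow_comm' _ hij (c • ei + (-a) • ej) ei]
  rw [Matrix.det_updateRow_add, Matrix.det_updateRow_smul, Matrix.det_updateRow_smul,
      Matrix.det_updateRow_add, Matrix.det_updateRow_smul, Matrix.det_updateRow_smul]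
  have hzero1 : ((D.updateRow j ej).updateRow i ej).det = 0 := by
    apply Matrix.det_zero_of_row_eq hij
    simp [Matrix.updateRow_ne hij.symm]
  have hzero2 : ((D.updateRow j ei).updateRow i ei).det = 0 := by
    apply Matrix.det_zero_of_row_eq hij
    simp [Matrix.updateRow_ne hij.symm]
  have hmain1 : ((D.updateRow j ej).updateRow i ei).det = c ^ (n - 2) := by
    have he : (D.updateRow j ej).updateRow i ei
        = Matrix.diagonal (fun k => if k = i ∨ k = j then (1:ℝ) else c) := by
      ext k l
      simp only [Matrix.updateRow_apply, Matrix.diagonal_apply, Pi.single_apply, hei, hej, hD]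
      split_ifs <;> simp_all
    rw [he, Matrix.det_diagonal, prod_d hij]
  have hmain2 : ((D.updateRow j ei).updateRow i ej).det = -(c ^ (n - 2)) := by
    have he : (D.updateRow j ei).updateRow i ej
        = (Matrix.diagonal (fun k => if k = i ∨ k = j then (1:ℝ) else c)).submatrix
            (Equiv.swap i j) id := by
      ext k l
      simp only [Matrix.updateRow_apply, Matrix.submatrix_apply, id_eq,
        Matrix.diagonal_apply, Pi.single_apply, hei, hej, hD]
      rcases eq_or_ne k i with rfl | hki
      · simp [Equiv.swap_apply_left, hij, eq_comm]
      · rcases eq_or_ne k j with rfl | hkj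
        · simp [Equiv.swap_apply_right, hij.symm, hki, eq_comm]
        · simp [Equiv.swap_apply_of_ne_of_ne hki hkj, hki, hkj]
    rw [he, Matrix.det_permute, Matrix.det_diagonal, prod_d hij,
      Equiv.Perm.sign_swap hij]
    simp
  rw [hzero1, hzero2, hmain1, hmain2]
  ring

lemma real_sign_mul_pos {ε x : ℝ} (hε : 0 < ε) : Real.sign (ε * x) = Real.sign x := by
  rcases lt_trichotomy x 0 with h | h | h
  · rw [Real.sign_of_neg h, Real.sign_of_neg (mul_neg_of_pos_of_neg hε h)]
  · simp [h]
  · rw [Real.sign_of_pos h, Real.sign_of_pos (mul_pos hε h)]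

open Filter in
theorem sign_semi_stable_offdiag {n : ℕ}
    (A : Matrix (Fin n) (Fin n) ℝ) (hA : SignSemiStable A) :
    ∀ i j, i ≠ j → A i j * A j i ≤ 0 := by
  intro i j hij
  by_contra hle
  push_neg at hle
  have hn : 0 < n := by
    have : Nontrivial (Fin n) := ⟨⟨i, j, hij⟩⟩
    have := Fintype.one_lt_card (α := Fin n)
    simpa using lt_trans one_pos (by simpa using this)
  set p : ℝ := A i j * A j i with hp
  set c : ℝ := Real.sqrt p / 2 with hc
  have hcpos : 0 < c := div_pos (Real.sqrt_pos.2 hle) two_pos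
  set Bf : ℝ → Matrix (Fin n) (Fin n) ℝ := fun ε => Matrix.of (fun k l =>
    if k = i ∧ l = j then A k l else if k = j ∧ l = i then A k l else ε * A k l) with hBf
  set f : ℝ → ℝ := fun ε => (Matrix.diagonal (fun _ => c) - Bf ε).det with hf
  -- value at 0
  have hB0 : Bf 0 = Matrix.of (fun k l =>
      if k = i ∧ l = j then A i j else if k = j ∧ l = i then A j i else 0) := by
    ext k l
    simp only [hBf, Matrix.of_apply]
    split_ifs with h1 h2
    · rw [h1.1, h1.2]
    · rw [h2.1, h2.2]
    · ring
  have hf0 : f 0 = c ^ (n - 2) * (c ^ 2 - p) := by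
    rw [hf]; dsimp only; rw [hB0, det_two_entries hij]
  have hc2 : c ^ 2 - p < 0 := by
    have : c ^ 2 = p / 4 := by
      rw [hc, div_pow, Real.sq_sqrt hle.le]; norm_num
    rw [this]; linarith
  have hf0neg : f 0 < 0 := by
    rw [hf0]
    exact mul_neg_of_pos_of_neg (pow_pos hcpos _) hc2
  -- continuity
  have hBcont : Continuous Bf := by
    apply continuous_matrix
    intro k l
    simp only [hBf, Matrix.of_apply]
    split_ifs
    · exact continuous_const
    · exact continuous_const
    · exact continuous_id.mul continuous_const
  have hfcont : Continuous f := by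
    apply Continuous.matrix_det
    exact continuous_const.sub hBcont
  -- find positive ε with f ε < 0
  have hev : ∀ᶠ ε in nhds (0:ℝ), f ε < 0 :=
    (hfcont.tendsto 0).eventually (gt_mem_nhds hf0neg)
  have hev' : ∀ᶠ ε in nhdsWithin (0:ℝ) (Set.Ioi 0), f ε < 0 ∧ 0 < ε :=
    (hev.filter_mono nhdsWithin_le_nhds).and (eventually_nhdsWithin_of_forall fun x hx => hx)
  obtain ⟨ε, hfε, hε⟩ := hev'.exists
  -- Bf ε has the same sign pattern as A
  have hpat : SameSignPattern A (Bf ε) := by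
    intro k l
    simp only [hBf, Matrix.of_apply]
    split_ifs
    · rfl
    · rfl
    · exact (real_sign_mul_pos hε).symm
  have hsemi : MatSemiStable (Bf ε) := hA _ hpat
  have := det_pos_of_matSemiStable hn (Bf ε) hsemi hcpos
  rw [hf] at hfε
  dsimp only at hfε
  linarith
end

section
/- Let V⁺, V⁻: (ℝ_{>0})^n → (ℝ_{>0})^n be C¹, and for x̄ in the positive orthant define the S-approximation coefficients α, β, G(x̄), H(x̄) of V⁺ and V⁻ at x̄. Assume G(x̄) − H(x̄) is invertible and define Ψ(x̄) = b^{(G−H)^{−1}} with b_i = β_i/α_i. Then Ψ(x̄) = x̄ if and only if V⁺(x̄) = V⁻(x̄), i.e., the fixed points of Ψ are exactly the positive equilibria of ẋ = V⁺(x) − V⁻(x). -/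
open Real

theorem fixed_points_of_Psi_are_equilibria {n : ℕ}
    (Vp Vm : (Fin n → ℝ) → Fin n → ℝ)
    (hVp : ContDiff ℝ 1 Vp) (hVm : ContDiff ℝ 1 Vm)
    (hVppos : ∀ x : Fin n → ℝ, (∀ j, 0 < x j) → ∀ i, 0 < Vp x i)
    (hVmpos : ∀ x : Fin n → ℝ, (∀ j, 0 < x j) → ∀ i, 0 < Vm x i)
    (xb : Fin n → ℝ) (hxb : ∀ j, 0 < xb j)
    (G H : Matrix (Fin n) (Fin n) ℝ)
    (hG : G = Matrix.of fun i j => xb j / Vp xb i *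
      fderiv ℝ (fun x => Vp x i) xb (Pi.single j 1))
    (hH : H = Matrix.of fun i j => xb j / Vm xb i *
      fderiv ℝ (fun x => Vm x i) xb (Pi.single j 1))
    (α β b : Fin n → ℝ)
    (hα : α = fun i => Vp xb i * ∏ j, (xb j) ^ (-(G i j)))
    (hβ : β = fun i => Vm xb i * ∏ j, (xb j) ^ (-(H i j)))
    (hb : b = fun i => β i / α i)
    (hdet : IsUnit (G - H).det) :
    (fun i => ∏ j, b j ^ (G - H)⁻¹ i j) = xb ↔ Vp xb = Vm xb := by
  have hVp' := hVppos xb hxb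
  have hVm' := hVmpos xb hxb
  set A := G - H with hAdef
  have hαpos : ∀ i, 0 < α i := by
    intro i; rw [hα]
    exact mul_pos (hVp' i) (Finset.prod_pos fun j _ => rpow_pos_of_pos (hxb j) _)
  have hβpos : ∀ i, 0 < β i := by
    intro i; rw [hβ]
    exact mul_pos (hVm' i) (Finset.prod_pos fun j _ => rpow_pos_of_pos (hxb j) _)
  have hbpos : ∀ i, 0 < b i := by
    intro i; rw [hb]; exact div_pos (hβpos i) (hαpos i)
  set L : Fin n → ℝ := fun j => Real.log (xb j) with hL
  set Lb : Fin n → ℝ := fun j => Real.log (b j) with hLb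
  -- log of b in terms of A and L
  have hlogb : ∀ i, Lb i = (A.mulVec L) i + (Real.log (Vm xb i) - Real.log (Vp xb i)) := by
    intro i
    have hprodG : Real.log (∏ j, (xb j) ^ (-(G i j))) = ∑ j, (-(G i j)) * L j := by
      rw [Real.log_prod (fun j _ => (rpow_pos_of_pos (hxb j) _).ne')]
      exact Finset.sum_congr rfl fun j _ => Real.log_rpow (hxb j) _
    have hprodH : Real.log (∏ j, (xb j) ^ (-(H i j))) = ∑ j, (-(H i j)) * L j := by
      rw [Real.log_prod (fun j _ => (rpow_pos_of_pos (hxb j) _).ne')]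
      exact Finset.sum_congr rfl fun j _ => Real.log_rpow (hxb j) _
    have : Lb i = Real.log (β i) - Real.log (α i) := by
      simp only [hLb, hb, Real.log_div (hβpos i).ne' (hαpos i).ne']
    rw [this, hα, hβ]
    simp only [Real.log_mul (hVm' i).ne' (Finset.prod_pos fun j _ =>
        rpow_pos_of_pos (hxb j) _).ne',
      Real.log_mul (hVp' i).ne' (Finset.prod_pos fun j _ =>
        rpow_pos_of_pos (hxb j) _).ne', hprodG, hprodH]
    simp only [Matrix.mulVec, dotProduct, hAdef, Matrix.sub_apply]
    have hsum : ∑ x, (G i x - H i x) * L x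
        = (∑ x, -H i x * L x) - ∑ x, -G i x * L x := by
      rw [← Finset.sum_sub_distrib]
      exact Finset.sum_congr rfl fun j _ => by ring
    rw [hsum]; ring
  -- log of the Psi map
  have hlogPsi : ∀ i, Real.log (∏ j, b j ^ (A⁻¹ i j)) = (A⁻¹.mulVec Lb) i := by
    intro i
    rw [Real.log_prod (fun j _ => (rpow_pos_of_pos (hbpos j) _).ne')]
    simp only [Matrix.mulVec, dotProduct]
    exact Finset.sum_congr rfl fun j _ => Real.log_rpow (hbpos j) _
  constructor
  · intro h
    -- from equality of functions get A⁻¹ *ᵥ Lb = L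
    have h1 : A⁻¹.mulVec Lb = L := by
      funext i
      rw [← hlogPsi i]
      exact congrArg Real.log (congrFun h i)
    have h2 : Lb = A.mulVec L := by
      calc Lb = (A * A⁻¹).mulVec Lb := by
              rw [Matrix.mul_nonsing_inv A hdet, Matrix.one_mulVec]
        _ = A.mulVec (A⁻¹.mulVec Lb) := by rw [Matrix.mulVec_mulVec]
        _ = A.mulVec L := by rw [h1]
    funext i
    have h3 : Real.log (Vm xb i) - Real.log (Vp xb i) = 0 := by
      have := hlogb i
      rw [h2] at this
      linarith [this]
    have h4 : Real.log (Vp xb i) = Real.log (Vm xb i) := by linarith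
    calc Vp xb i = Real.exp (Real.log (Vp xb i)) := (Real.exp_log (hVp' i)).symm
      _ = Real.exp (Real.log (Vm xb i)) := by rw [h4]
      _ = Vm xb i := Real.exp_log (hVm' i)
  · intro h
    have h2 : Lb = A.mulVec L := by
      funext i
      rw [hlogb i, congrFun h i]
      ring
    have h1 : A⁻¹.mulVec Lb = L := by
      rw [h2, Matrix.mulVec_mulVec, Matrix.nonsing_inv_mul A hdet, Matrix.one_mulVec]
    funext i
    have := congrFun h1 i
    rw [← hlogPsi i] at this
    calc (∏ j, b j ^ (A⁻¹ i j))
        = Real.exp (Real.log (∏ j, b j ^ (A⁻¹ i j))) :=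
          (Real.exp_log (Finset.prod_pos fun j _ => rpow_pos_of_pos (hbpos j) _)).symm
      _ = Real.exp (L i) := by rw [this]
      _ = xb i := Real.exp_log (hxb i)
end

section
/- For the S-system ẋ = 3xy² − 2x⁴, ẏ = 4x³y⁴ − x⁵y³ on the positive quadrant, the unique positive equilibrium is (32/3, 256/9), and both eigenvalues of the Jacobian at this equilibrium are positive (the Jacobian has positive trace and positive determinant), so the equilibrium is unstable despite G − H = [[−3,2],[−2,1]] being a stable matrix. -/
open Real Matrix

lemma quad_root_re_pos (t d : ℝ) (ht : 0 < t) (hd : 0 < d) (μ : ℂ)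
    (h : μ ^ 2 - (t : ℂ) * μ + (d : ℂ) = 0) : 0 < μ.re := by
  have him : 2 * μ.re * μ.im - t * μ.im = 0 := by
    have := congrArg Complex.im h
    simp [pow_two, Complex.mul_im, Complex.mul_re] at this
    linarith
  have hre : μ.re ^ 2 - μ.im ^ 2 - t * μ.re + d = 0 := by
    have := congrArg Complex.re h
    simp [pow_two, Complex.mul_re, Complex.mul_im] at this
    nlinarith [this]
  rcases eq_or_ne μ.im 0 with hb | hb
  · -- real eigenvalue
    rw [hb] at hre
    nlinarith [hre]
  · have : 2 * μ.re = t := by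
      have := mul_eq_zero.mp (by linarith [him] : (2 * μ.re - t) * μ.im = 0)
      rcases this with h1 | h1
      · linarith
      · exact absurd h1 hb
    linarith

lemma spec_quad (M : Matrix (Fin 2) (Fin 2) ℝ) (μ : ℂ)
    (h : μ ∈ spectrum ℂ (M.map (Complex.ofReal : ℝ → ℂ))) :
    μ ^ 2 - ((M 0 0 + M 1 1 : ℝ) : ℂ) * μ + ((M 0 0 * M 1 1 - M 0 1 * M 1 0 : ℝ) : ℂ) = 0 := by
  rw [spectrum.mem_iff, Matrix.isUnit_iff_isUnit_det, isUnit_iff_ne_zero, ne_eq, not_not] at h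
  rw [Matrix.det_fin_two] at h
  simp [Matrix.algebraMap_eq_diagonal, Matrix.diagonal, Matrix.map_apply] at h
  push_cast
  ring_nf
  ring_nf at h
  linear_combination h

theorem S_system_unstable_despite_stable_GH
    (J : Matrix (Fin 2) (Fin 2) ℝ)
    (hJ : J = !![deriv (fun x : ℝ => 3 * x * (256 / 9 : ℝ) ^ 2 - 2 * x ^ 4) (32 / 3),
                 deriv (fun y : ℝ => 3 * (32 / 3 : ℝ) * y ^ 2 - 2 * (32 / 3 : ℝ) ^ 4) (256 / 9);
                 deriv (fun x : ℝ => 4 * x ^ 3 * (256 / 9 : ℝ) ^ 4 - x ^ 5 * (256 / 9 : ℝ) ^ 3) (32 / 3),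
                 deriv (fun y : ℝ => 4 * (32 / 3 : ℝ) ^ 3 * y ^ 4 - (32 / 3 : ℝ) ^ 5 * y ^ 3) (256 / 9)]) :
    (∀ x y : ℝ, 0 < x → 0 < y →
      ((3 * x * y ^ 2 - 2 * x ^ 4 = 0 ∧ 4 * x ^ 3 * y ^ 4 - x ^ 5 * y ^ 3 = 0) ↔
        (x = 32 / 3 ∧ y = 256 / 9))) ∧
    0 < J.trace ∧ 0 < J.det ∧
    (∀ μ ∈ spectrum ℂ (J.map (Complex.ofReal : ℝ → ℂ)), 0 < μ.re) ∧
    (∀ μ ∈ spectrum ℂ ((!![(-3 : ℝ), 2; -2, 1]).map (Complex.ofReal : ℝ → ℂ)),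
      μ.re < 0) := by
  -- compute the four derivatives
  have h11 : HasDerivAt (fun x : ℝ => 3 * x * (256 / 9 : ℝ) ^ 2 - 2 * x ^ 4)
      (3 * 1 * (256 / 9 : ℝ) ^ 2 - 2 * (4 * (32 / 3 : ℝ) ^ (4 - 1))) (32 / 3) :=
    (((hasDerivAt_id (32 / 3 : ℝ)).const_mul 3).mul_const ((256 / 9 : ℝ) ^ 2)).sub
      ((hasDerivAt_pow 4 (32 / 3 : ℝ)).const_mul 2)
  have h12 : HasDerivAt (fun y : ℝ => 3 * (32 / 3 : ℝ) * y ^ 2 - 2 * (32 / 3 : ℝ) ^ 4)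
      (3 * (32 / 3 : ℝ) * (2 * (256 / 9 : ℝ) ^ (2 - 1))) (256 / 9) :=
    ((hasDerivAt_pow 2 (256 / 9 : ℝ)).const_mul (3 * (32 / 3 : ℝ))).sub_const _
  have h21 : HasDerivAt (fun x : ℝ => 4 * x ^ 3 * (256 / 9 : ℝ) ^ 4 - x ^ 5 * (256 / 9 : ℝ) ^ 3)
      (4 * (3 * (32 / 3 : ℝ) ^ (3 - 1)) * (256 / 9 : ℝ) ^ 4
        - 5 * (32 / 3 : ℝ) ^ (5 - 1) * (256 / 9 : ℝ) ^ 3) (32 / 3) :=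
    (((hasDerivAt_pow 3 (32 / 3 : ℝ)).const_mul 4).mul_const ((256 / 9 : ℝ) ^ 4)).sub
      ((hasDerivAt_pow 5 (32 / 3 : ℝ)).mul_const ((256 / 9 : ℝ) ^ 3))
  have h22 : HasDerivAt (fun y : ℝ => 4 * (32 / 3 : ℝ) ^ 3 * y ^ 4 - (32 / 3 : ℝ) ^ 5 * y ^ 3)
      (4 * (32 / 3 : ℝ) ^ 3 * (4 * (256 / 9 : ℝ) ^ (4 - 1))
        - (32 / 3 : ℝ) ^ 5 * (3 * (256 / 9 : ℝ) ^ (3 - 1))) (256 / 9) :=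
    ((hasDerivAt_pow 4 (256 / 9 : ℝ)).const_mul (4 * (32 / 3 : ℝ) ^ 3)).sub
      ((hasDerivAt_pow 3 (256 / 9 : ℝ)).const_mul ((32 / 3 : ℝ) ^ 5))
  have e11 : deriv (fun x : ℝ => 3 * x * (256 / 9 : ℝ) ^ 2 - 2 * x ^ 4) (32 / 3)
      = -65536 / 9 := by rw [h11.deriv]; norm_num
  have e12 : deriv (fun y : ℝ => 3 * (32 / 3 : ℝ) * y ^ 2 - 2 * (32 / 3 : ℝ) ^ 4) (256 / 9)
      = 16384 / 9 := by rw [h12.deriv]; norm_num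
  have e21 : deriv (fun x : ℝ => 4 * x ^ 3 * (256 / 9 : ℝ) ^ 4 - x ^ 5 * (256 / 9 : ℝ) ^ 3) (32 / 3)
      = -35184372088832 / 59049 := by rw [h21.deriv]; norm_num
  have e22 : deriv (fun y : ℝ => 4 * (32 / 3 : ℝ) ^ 3 * y ^ 4 - (32 / 3 : ℝ) ^ 5 * y ^ 3) (256 / 9)
      = 2199023255552 / 19683 := by rw [h22.deriv]; norm_num
  rw [e11, e12, e21, e22] at hJ
  subst hJ
  refine ⟨?_, ?_, ?_, ?_, ?_⟩
  · intro x y hx hy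
    constructor
    · rintro ⟨h1, h2⟩
      have hy2 : 4 * y = x ^ 2 := by
        have hfac : x ^ 3 * y ^ 3 * (4 * y - x ^ 2) = 0 := by linear_combination h2
        rcases mul_eq_zero.mp hfac with h | h
        · exfalso; rcases mul_eq_zero.mp h with h | h
          · exact absurd h (by positivity)
          · exact absurd h (by positivity)
        · linarith
      have hx1 : 3 * y ^ 2 = 2 * x ^ 3 := by
        have hfac : x * (3 * y ^ 2 - 2 * x ^ 3) = 0 := by linear_combination h1
        rcases mul_eq_zero.mp hfac with h | h
        · exact absurd h (ne_of_gt hx)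
        · linarith
      have hxv : x = 32 / 3 := by
        have hfac : x ^ 2 * (3 * x - 32) = 0 := by nlinarith [hy2, hx1]
        rcases mul_eq_zero.mp hfac with h | h
        · exact absurd h (by positivity)
        · linarith
      refine ⟨hxv, by nlinarith [hy2, hxv]⟩
    · rintro ⟨hx1, hy1⟩
      subst hx1; subst hy1; norm_num
  · simp [Matrix.trace_fin_two]
    norm_num
  · simp [Matrix.det_fin_two]
    norm_num
  · intro μ hμ
    have h := spec_quad _ μ hμ
    simp only [Matrix.cons_val', Matrix.cons_val_zero, Matrix.cons_val_one, Matrix.head_cons,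
      Matrix.head_fin_const, Matrix.empty_val', Matrix.cons_val_fin_one, Matrix.of_apply] at h
    norm_num at h
    refine quad_root_re_pos (2198879928320 / 19683) (144115188075855872 / 531441)
      (by norm_num) (by norm_num) μ ?_
    push_cast at h ⊢
    linear_combination h
  · intro μ hμ
    have h := spec_quad _ μ hμ
    simp only [Matrix.cons_val', Matrix.cons_val_zero, Matrix.cons_val_one, Matrix.head_cons,
      Matrix.head_fin_const, Matrix.empty_val', Matrix.cons_val_fin_one, Matrix.of_apply] at h
    norm_num at h
    have h' : (μ + 1) ^ 2 = 0 := by linear_combination h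
    have h0 : μ + 1 = 0 := pow_eq_zero_iff (n := 2) (by norm_num) |>.mp h'
    have : μ = -1 := by linear_combination h0
    rw [this]; norm_num
end
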